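/- Let Ω be a finite set of odd size n ≥ 3 and let ω ∈ Ω. Then the hypergraph H_ω = {{ω}} ∪ {A ⊆ Ω∖{ω} : |A| = 2} is a domination hypergraph: indeed, if G' is any graph realizing U_{2,Ω∖{ω}} (obtained from K_{Ω∖{ω}} by deleting a perfect matching), then the join G = K_{{ω}} ∨ G' satisfies D(G) = H_ω. -/

import Mathlib

def IsDominating {V : Type*} (G : SimpleGraph V) (D : Set V) : Prop :=
  ∀ v ∉ D, ∃ u ∈ D, G.Adj u v

def IsMinDominating {V : Type*} (G : SimpleGraph V) (D : Set V) : Prop :=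
  IsDominating G D ∧ ∀ D' ⊂ D, ¬ IsDominating G D'

/-!
A vertex `w` adjacent to every other vertex dominates on its own, so a minimal dominating set
either is `{w}` or avoids `w`. A nonempty set avoiding `w` dominates the whole graph exactly when
it dominates the graph `G'` left after removing `w` (`w` itself is dominated by any vertex),
and since subsets of a set avoiding `w` avoid `w` as well, this equivalence passes to minimality.
Hence the minimal dominating sets of the join are `{w}` and those of `G'`, which by hypothesis
are the pairs.
-/

open Set

section

variable {V : Type*} {G : SimpleGraph V}

theorem not_isDominating_empty [Nonempty V] : ¬ IsDominating G ∅ := fun h =>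
  let ⟨_, hu, _⟩ := h (Classical.arbitrary V) (notMem_empty _)
  hu

variable {w : V}

theorem isDominating_singleton (hw : ∀ v, v ≠ w → G.Adj w v) : IsDominating G {w} :=
  fun v hv => ⟨w, rfl, hw v hv⟩

theorem isMinDominating_singleton (hw : ∀ v, v ≠ w → G.Adj w v) : IsMinDominating G {w} := by
  have : Nonempty V := ⟨w⟩
  refine ⟨isDominating_singleton hw, fun D' hD' => ?_⟩
  rw [ssubset_singleton_iff.1 hD']
  exact not_isDominating_empty

theorem IsMinDominating.eq_singleton_of_mem {D : Set V} (hD : IsMinDominating G D)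
    (hw : ∀ v, v ≠ w → G.Adj w v) (hwD : w ∈ D) : D = {w} := by
  by_contra hne
  exact hD.2 {w} ((singleton_subset_iff.2 hwD).ssubset_of_ne (Ne.symm hne))
    (isDominating_singleton hw)

theorem subset_range_val_of_notMem {D : Set V} (hwD : w ∉ D) :
    D ⊆ range (Subtype.val : {x : V // x ≠ w} → V) :=
  fun x hx => ⟨⟨x, ne_of_mem_of_not_mem hx hwD⟩, rfl⟩

theorem image_val_preimage_val_of_notMem {D : Set V} (hwD : w ∉ D) :
    Subtype.val '' (Subtype.val ⁻¹' D : Set {x : V // x ≠ w}) = D :=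
  image_preimage_eq_of_subset (subset_range_val_of_notMem hwD)

theorem ncard_preimage_val_of_notMem {D : Set V} (hwD : w ∉ D) :
    (Subtype.val ⁻¹' D : Set {x : V // x ≠ w}).ncard = D.ncard :=
  ncard_preimage_of_injective_subset_range Subtype.val_injective (subset_range_val_of_notMem hwD)

variable {G' : SimpleGraph {x : V // x ≠ w}}

theorem isDominating_image_val_iff [Nonempty {x : V // x ≠ w}]
    (hw : ∀ v, v ≠ w → G.Adj w v) (hG : ∀ x y, G'.Adj x y ↔ G.Adj x y)
    (S : Set {x : V // x ≠ w}) : IsDominating G (Subtype.val '' S) ↔ IsDominating G' S := by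
  rcases S.eq_empty_or_nonempty with rfl | ⟨s, hs⟩
  · have : Nonempty V := ⟨w⟩
    simp only [image_empty, not_isDominating_empty]
  constructor
  · intro h v hv
    obtain ⟨_, ⟨u, hu, rfl⟩, huv⟩ := h v (Subtype.val_injective.mem_set_image.not.2 hv)
    exact ⟨u, hu, (hG u v).2 huv⟩
  · intro h v hv
    by_cases hvw : v = w
    · subst hvw
      exact ⟨s, mem_image_of_mem _ hs, (hw s s.2).symm⟩
    · obtain ⟨u, hu, huv⟩ := h ⟨v, hvw⟩ fun hvS => hv (mem_image_of_mem _ hvS)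
      exact ⟨u, mem_image_of_mem _ hu, (hG u ⟨v, hvw⟩).1 huv⟩

theorem isMinDominating_image_val_iff [Nonempty {x : V // x ≠ w}]
    (hw : ∀ v, v ≠ w → G.Adj w v) (hG : ∀ x y, G'.Adj x y ↔ G.Adj x y)
    (S : Set {x : V // x ≠ w}) :
    IsMinDominating G (Subtype.val '' S) ↔ IsMinDominating G' S := by
  simp only [IsMinDominating, isDominating_image_val_iff hw hG]
  refine and_congr_right fun _ => ⟨fun h S' hS' => ?_, fun h D' hD' => ?_⟩
  · rw [← isDominating_image_val_iff hw hG]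
    exact h _ (Subtype.val_injective.image_strictMono hS')
  · obtain ⟨S', -, rfl⟩ := subset_image_iff.1 hD'.1
    rw [isDominating_image_val_iff hw hG]
    exact h S' ((Subtype.val_injective.injOn.image_ssubset_image_iff (subset_univ _)
      (subset_univ _)).1 hD')

theorem isMinDominating_iff_of_forall_adj (hw : ∀ v, v ≠ w → G.Adj w v)
    (hG : ∀ x y, G'.Adj x y ↔ G.Adj x y) {D : Set V} :
    IsMinDominating G D ↔
      D = {w} ∨ w ∉ D ∧ D.Nonempty ∧ IsMinDominating G' (Subtype.val ⁻¹' D) := by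
  have : Nonempty V := ⟨w⟩
  constructor
  · intro hD
    by_cases hwD : w ∈ D
    · exact Or.inl (hD.eq_singleton_of_mem hw hwD)
    obtain ⟨x, hx⟩ : D.Nonempty := nonempty_iff_ne_empty.2 fun hD0 =>
      not_isDominating_empty (hD0 ▸ hD.1)
    have : Nonempty {x : V // x ≠ w} := ⟨⟨x, ne_of_mem_of_not_mem hx hwD⟩⟩
    refine Or.inr ⟨hwD, ⟨x, hx⟩, ?_⟩
    rwa [← isMinDominating_image_val_iff hw hG, image_val_preimage_val_of_notMem hwD]
  · rintro (rfl | ⟨hwD, ⟨x, hx⟩, hD⟩)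
    · exact isMinDominating_singleton hw
    have : Nonempty {x : V // x ≠ w} := ⟨⟨x, ne_of_mem_of_not_mem hx hwD⟩⟩
    rwa [← image_val_preimage_val_of_notMem hwD, isMinDominating_image_val_iff hw hG]

end

theorem join_realizes_Homega_general {V : Type*} (w : V)
    (G' : SimpleGraph {x : V // x ≠ w})
    (hG' : {D : Set {x : V // x ≠ w} | IsMinDominating G' D}
        = {A : Set {x : V // x ≠ w} | A.ncard = 2})
    (Gj : SimpleGraph V)
    (hGj : ∀ x y : V, Gj.Adj x y ↔ x ≠ y ∧ (x = w ∨ y = w ∨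
        ∃ (hx : x ≠ w) (hy : y ≠ w), G'.Adj ⟨x, hx⟩ ⟨y, hy⟩)) :
    {D : Set V | IsMinDominating Gj D}
        = {({w} : Set V)} ∪ {A : Set V | w ∉ A ∧ A.ncard = 2} ∧
    ∃ G : SimpleGraph V, {D : Set V | IsMinDominating G D}
        = {({w} : Set V)} ∪ {A : Set V | w ∉ A ∧ A.ncard = 2} := by
  have hw : ∀ v, v ≠ w → Gj.Adj w v := fun v hv => (hGj w v).2 ⟨hv.symm, Or.inl rfl⟩
  have hG : ∀ x y, G'.Adj x y ↔ Gj.Adj x y := fun x y => by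
    rw [hGj]
    refine ⟨fun h => ⟨fun hxy => h.ne (Subtype.ext hxy), Or.inr (Or.inr ⟨x.2, y.2, h⟩)⟩, ?_⟩
    rintro ⟨-, hx | hy | ⟨_, _, h⟩⟩
    exacts [absurd hx x.2, absurd hy y.2, h]
  have hpairs (S : Set {x : V // x ≠ w}) : IsMinDominating G' S ↔ S.ncard = 2 :=
    Set.ext_iff.1 hG' S
  have hmin : {D : Set V | IsMinDominating Gj D}
      = {({w} : Set V)} ∪ {A : Set V | w ∉ A ∧ A.ncard = 2} := by
    ext D
    simp only [mem_ofPred_eq, mem_union, mem_singleton_iff,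
      isMinDominating_iff_of_forall_adj hw hG, hpairs]
    refine or_congr_right ⟨fun ⟨hwD, _, h2⟩ => ⟨hwD, ncard_preimage_val_of_notMem hwD ▸ h2⟩, fun ⟨hwD, h2⟩ =>
      ⟨hwD, nonempty_of_ncard_ne_zero (by omega), (ncard_preimage_val_of_notMem hwD).trans h2⟩⟩
  exact ⟨hmin, Gj, hmin⟩

/-- Let `Ω` be of odd size `n ≥ 3` and `ω ∈ Ω`. The hypergraph
`H_ω = {{ω}} ∪ {A ⊆ Ω∖{ω} : |A| = 2}` is a domination hypergraph: indeed, if `G'` is any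
graph on `Ω∖{ω}` realizing `U_{2,Ω∖{ω}}`, then the join `G = K_{{ω}} ∨ G'` satisfies
`D(G) = H_ω`. -/
theorem join_realizes_Homega {V : Type*} [Fintype V]
    (hodd : Odd (Fintype.card V)) (hn : 3 ≤ Fintype.card V) (w : V)
    (G' : SimpleGraph {x : V // x ≠ w})
    (hG' : {D : Set {x : V // x ≠ w} | IsMinDominating G' D}
        = {A : Set {x : V // x ≠ w} | A.ncard = 2})
    (Gj : SimpleGraph V)
    (hGj : ∀ x y : V, Gj.Adj x y ↔ x ≠ y ∧ (x = w ∨ y = w ∨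
        ∃ (hx : x ≠ w) (hy : y ≠ w), G'.Adj ⟨x, hx⟩ ⟨y, hy⟩)) :
    {D : Set V | IsMinDominating Gj D}
        = {({w} : Set V)} ∪ {A : Set V | w ∉ A ∧ A.ncard = 2} ∧
    ∃ G : SimpleGraph V, {D : Set V | IsMinDominating G D}
        = {({w} : Set V)} ∪ {A : Set V | w ∉ A ∧ A.ncard = 2} :=
  join_realizes_Homega_general w G' hG' Gj hGj
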